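/- Let Ψ be a subset-generating function, let F : [0,1] → 𝔍 be a set-valued function, let n ≥ 1, let x ∈ [0,1], and let x′ be a point closest to x among the nodes i/n, i = 0,…,n. Then d_μ(F(x), B_n(F,x)) ≤ 2·d_μ(F(x′), F(x)) + ∑_{i=0}^n b(n,x;i)·d_μ(F(x), F(i/n)). -/

import Mathlib

open MeasureTheory Set

noncomputable section

/-- Euclidean space ℝ^m. -/
abbrev Em (m : ℕ) : Type := EuclideanSpace ℝ (Fin m)

/-- A bounded set whose topological boundary has Lebesgue measure zero
(bounded Jordan measurable set). -/
def JordanMeas {m : ℕ} (A : Set (Em m)) : Prop :=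
  Bornology.IsBounded A ∧ volume (frontier A) = 0

/-- A bounded set equal to the closure of its interior (regular compact set). -/
def RegCompact {m : ℕ} (A : Set (Em m)) : Prop :=
  Bornology.IsBounded A ∧ A = closure (interior A)

/-- Membership in the collection 𝔍 of regular compact Jordan measurable sets. -/
def MemJ {m : ℕ} (A : Set (Em m)) : Prop :=
  RegCompact A ∧ JordanMeas A

/-- The partition element Ω_χ = (⋂_{k∈χ} A_k) \ (⋃_{l∉χ} A_l). -/
def partElem {m n : ℕ} (A : Fin (n+1) → Set (Em m)) (χ : Finset (Fin (n+1))) : Set (Em m) :=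
  (⋂ k ∈ χ, A k) \ (⋃ l ∈ χᶜ, A l)

/-- A subset-generating function Ψ. -/
structure SubsetGen (m : ℕ) where
  Ψ : Set (Em m) → ℝ → Set (Em m)
  subset : ∀ A t, JordanMeas A → 0 ≤ t → t ≤ 1 → Ψ A t ⊆ A
  memJ : ∀ A t, JordanMeas A → 0 ≤ t → t ≤ 1 → MemJ (Ψ A t)
  meas : ∀ A t, JordanMeas A → 0 ≤ t → t ≤ 1 →
    volume (Ψ A t) = ENNReal.ofReal t * volume A
  mono : ∀ A s t, JordanMeas A → 0 ≤ s → s ≤ t → t ≤ 1 → Ψ A s ⊆ Ψ A t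

/-- The partition average ⊗_{i=0}^n α_i A_i = ⋃_{∅≠χ⊆{0,…,n}} Ψ(Ω_χ, ∑_{k∈χ} α_k). -/
def partAvg {m n : ℕ} (S : SubsetGen m) (α : Fin (n+1) → ℝ)
    (A : Fin (n+1) → Set (Em m)) : Set (Em m) :=
  ⋃ χ ∈ {χ : Finset (Fin (n+1)) | χ.Nonempty}, S.Ψ (partElem A χ) (∑ k ∈ χ, α k)

/-- The symmetric difference (pseudo)metric d_μ(A,B) = μ(A Δ B). -/
def dmu {m : ℕ} (A B : Set (Em m)) : ℝ :=
  (volume ((A \ B) ∪ (B \ A))).toReal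

/-- The Bernstein weight b(n,x;i) = C(n,i)·x^i·(1−x)^{n−i}. -/
def bern (n i : ℕ) (x : ℝ) : ℝ :=
  (n.choose i : ℝ) * x ^ i * (1 - x) ^ (n - i)

/-- The set-valued Bernstein operator B_n(F,x) = ⊗_{i=0}^n b(n,x;i)·F(i/n). -/
def setBern {m : ℕ} (S : SubsetGen m) (F : ℝ → Set (Em m)) (n : ℕ) (x : ℝ) : Set (Em m) :=
  partAvg S (fun i : Fin (n+1) => bern n (i : ℕ) x)
    (fun i : Fin (n+1) => F ((i : ℕ) / n))

/-! The cells `Ω_χ` partition `ℝ^m`, and inside `Ω_χ` the set `A_j ∆ ⊗ α_i A_i` is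
`Ω_χ \ Ψ(Ω_χ, s_χ)` when `j ∈ χ` and `Ψ(Ω_χ, s_χ)` when `j ∉ χ`, where `s_χ = ∑_{k ∈ χ} α_k`.
In both cases its measure is at most `(∑ α_i) μ(Ω_χ)`, the sum running over those `i` with
`i ∈ χ ↔ j ∉ χ`, and for these `i` the cell `Ω_χ` lies in `A_i ∆ A_j`. Summing over `χ` gives
`d_μ(A_j, ⊗ α_i A_i) ≤ ∑ α_i d_μ(A_j, A_i)`. Applied at the node `x'`, together with two
triangle inequalities for `d_μ`, this yields the bound. -/

open Function
open scoped symmDiff ENNReal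

open Finset in
theorem null_frontier_biInter_finset {X ι : Type*} [TopologicalSpace X] [MeasurableSpace X]
    {μ : Measure X} (s : Finset ι) {t : ι → Set X} (h : ∀ i ∈ s, μ (frontier (t i)) = 0) :
    μ (frontier (⋂ i ∈ s, t i)) = 0 := by
  classical
  induction s using Finset.induction_on with
  | empty => simp
  | insert a s _ ih =>
    rw [set_biInter_insert]
    exact null_frontier_inter (h a (mem_insert_self a s))
      (ih fun i hi => h i (mem_insert_of_mem hi))

theorem sum_mem_Icc_of_sum_eq_one {ι : Type*} [Fintype ι] {α : ι → ℝ} (hα : ∀ i, 0 ≤ α i)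
    (hα1 : ∑ i, α i = 1) (s : Finset ι) : ∑ i ∈ s, α i ∈ Icc (0 : ℝ) 1 :=
  ⟨Finset.sum_nonneg fun i _ => hα i, hα1 ▸ Finset.sum_le_univ_sum_of_nonneg hα⟩

section PartElem

variable {m n : ℕ} {A : Fin (n+1) → Set (Em m)} {χ : Finset (Fin (n+1))}

theorem mem_partElem {y : Em m} : y ∈ partElem A χ ↔ ∀ k, (k ∈ χ ↔ y ∈ A k) := by
  simp only [partElem, mem_sdiff, mem_iInter, mem_iUnion, Finset.mem_compl, exists_prop,
    not_exists, not_and]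
  exact ⟨fun h k => ⟨h.1 k, not_imp_not.mp (h.2 k)⟩,
    fun h => ⟨fun k => (h k).1, fun k => not_imp_not.mpr (h k).2⟩⟩

theorem partElem_subset {k : Fin (n+1)} (hk : k ∈ χ) : partElem A χ ⊆ A k :=
  fun _ hy => (mem_partElem.mp hy k).1 hk

theorem partElem_subset_symmDiff {i j : Fin (n+1)} (h : i ∈ χ ↔ j ∉ χ) :
    partElem A χ ⊆ A i ∆ A j := by
  intro y hy
  rw [mem_symmDiff, ← (mem_partElem.mp hy i), ← (mem_partElem.mp hy j)]
  tauto

theorem pairwise_disjoint_partElem (A : Fin (n+1) → Set (Em m)) :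
    Pairwise (Disjoint on partElem A) := fun _ _ hne =>
  Set.disjoint_left.mpr fun _ h h' =>
    hne (Finset.ext fun k => (mem_partElem.mp h k).trans (mem_partElem.mp h' k).symm)

theorem iUnion_partElem (A : Fin (n+1) → Set (Em m)) : ⋃ χ, partElem A χ = univ := by
  classical
  refine eq_univ_of_forall fun y => mem_iUnion.mpr ⟨Finset.univ.filter (y ∈ A ·), ?_⟩
  simp [mem_partElem]

theorem null_frontier_partElem (hA : ∀ i, volume (frontier (A i)) = 0)
    (χ : Finset (Fin (n+1))) : volume (frontier (partElem A χ)) = 0 := by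
  rw [partElem, sdiff_eq, compl_iUnion₂]
  refine null_frontier_inter (null_frontier_biInter_finset χ fun i _ => hA i)
    (null_frontier_biInter_finset χᶜ fun i _ => ?_)
  rw [frontier_compl]
  exact hA i

theorem jordanMeas_partElem (hA : ∀ i, JordanMeas (A i)) (hχ : χ.Nonempty) :
    JordanMeas (partElem A χ) :=
  ⟨(hA hχ.choose).1.subset (partElem_subset hχ.choose_spec),
    null_frontier_partElem (fun i => (hA i).2) χ⟩

theorem sum_measure_partElem_le (hA : ∀ i, volume (frontier (A i)) = 0)
    {T : Finset (Finset (Fin (n+1)))} {D : Set (Em m)} (hT : ∀ χ ∈ T, partElem A χ ⊆ D) :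
    ∑ χ ∈ T, volume (partElem A χ) ≤ volume D := by
  rw [← measure_biUnion_finset₀
    (fun χ _ χ' _ hne => (pairwise_disjoint_partElem A hne).aedisjoint)
    fun χ _ => nullMeasurableSet_of_null_frontier (null_frontier_partElem hA χ)]
  exact measure_mono (iUnion₂_subset hT)

end PartElem

section PartAvg

open Finset

variable {m n : ℕ} (S : SubsetGen m) {α : Fin (n+1) → ℝ} {A : Fin (n+1) → Set (Em m)}
  {χ : Finset (Fin (n+1))}
  (hA : ∀ i, JordanMeas (A i)) (hα : ∀ i, 0 ≤ α i) (hα1 : ∑ i, α i = 1)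
include hA hα hα1

theorem Ψ_partElem_subset (hχ : χ.Nonempty) :
    S.Ψ (partElem A χ) (∑ k ∈ χ, α k) ⊆ partElem A χ :=
  S.subset _ _ (jordanMeas_partElem hA hχ) (sum_mem_Icc_of_sum_eq_one hα hα1 χ).1
    (sum_mem_Icc_of_sum_eq_one hα hα1 χ).2

theorem partAvg_subset_iUnion : partAvg S α A ⊆ ⋃ i, A i :=
  iUnion₂_subset fun _ hχ => (Ψ_partElem_subset S hA hα hα1 hχ).trans
    ((partElem_subset hχ.choose_spec).trans (subset_iUnion A _))

theorem partElem_inter_partAvg_subset :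
    partElem A χ ∩ partAvg S α A ⊆ S.Ψ (partElem A χ) (∑ k ∈ χ, α k) := by
  rintro y ⟨hyχ, hy⟩
  obtain ⟨χ', hχ', hyχ'⟩ := mem_iUnion₂.mp hy
  obtain rfl : χ' = χ := by
    by_contra hne
    exact Set.disjoint_left.mp (pairwise_disjoint_partElem A hne)
      (Ψ_partElem_subset S hA hα hα1 hχ' hyχ') hyχ
  exact hyχ'

theorem isBounded_partAvg : Bornology.IsBounded (partAvg S α A) :=
  (Bornology.isBounded_iUnion.mpr fun i => (hA i).1).subset (partAvg_subset_iUnion S hA hα hα1)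

theorem memJ_Ψ_partElem (hχ : χ.Nonempty) : MemJ (S.Ψ (partElem A χ) (∑ k ∈ χ, α k)) :=
  S.memJ _ _ (jordanMeas_partElem hA hχ) (sum_mem_Icc_of_sum_eq_one hα hα1 χ).1
    (sum_mem_Icc_of_sum_eq_one hα hα1 χ).2

theorem volume_Ψ_partElem (hχ : χ.Nonempty) :
    volume (S.Ψ (partElem A χ) (∑ k ∈ χ, α k)) =
      (∑ k ∈ χ, ENNReal.ofReal (α k)) * volume (partElem A χ) := by
  rw [S.meas _ _ (jordanMeas_partElem hA hχ) (sum_mem_Icc_of_sum_eq_one hα hα1 χ).1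
    (sum_mem_Icc_of_sum_eq_one hα hα1 χ).2, ENNReal.ofReal_sum_of_nonneg fun k _ => hα k]

theorem measure_partElem_inter_symmDiff_partAvg_le_of_mem {j : Fin (n+1)} (hj : j ∈ χ) :
    volume (partElem A χ ∩ (A j ∆ partAvg S α A)) ≤
      (∑ i ∈ χᶜ, ENNReal.ofReal (α i)) * volume (partElem A χ) := by
  have hχ : χ.Nonempty := ⟨j, hj⟩
  have hsub : partElem A χ ∩ (A j ∆ partAvg S α A) ⊆
      partElem A χ \ S.Ψ (partElem A χ) (∑ k ∈ χ, α k) := by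
    rintro y ⟨hyχ, hy⟩
    refine ⟨hyχ, fun hyΨ => ?_⟩
    have hyB : y ∈ partAvg S α A := mem_iUnion₂.mpr ⟨χ, hχ, hyΨ⟩
    simp [mem_symmDiff, partElem_subset hj hyχ, hyB] at hy
  have hJ := memJ_Ψ_partElem S hA hα hα1 hχ
  have hw1 : ∑ i, ENNReal.ofReal (α i) = 1 := by
    rw [← ENNReal.ofReal_sum_of_nonneg fun k _ => hα k, hα1, ENNReal.ofReal_one]
  calc volume (partElem A χ ∩ (A j ∆ partAvg S α A))
      ≤ volume (partElem A χ \ S.Ψ (partElem A χ) (∑ k ∈ χ, α k)) := measure_mono hsub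
    _ = volume (partElem A χ) - volume (S.Ψ (partElem A χ) (∑ k ∈ χ, α k)) :=
      measure_sdiff (Ψ_partElem_subset S hA hα hα1 hχ)
        (nullMeasurableSet_of_null_frontier hJ.2.2) hJ.2.1.measure_lt_top.ne
    _ ≤ (∑ i ∈ χᶜ, ENNReal.ofReal (α i)) * volume (partElem A χ) := by
      rw [tsub_le_iff_right, volume_Ψ_partElem S hA hα hα1 hχ, ← add_mul, sum_compl_add_sum,
        hw1, one_mul]

theorem measure_partElem_inter_symmDiff_partAvg_le_of_notMem {j : Fin (n+1)} (hj : j ∉ χ) :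
    volume (partElem A χ ∩ (A j ∆ partAvg S α A)) ≤
      (∑ i ∈ χ, ENNReal.ofReal (α i)) * volume (partElem A χ) := by
  have hsub : partElem A χ ∩ (A j ∆ partAvg S α A) ⊆ partElem A χ ∩ partAvg S α A := by
    rintro y ⟨hyχ, hy⟩
    have hyj : y ∉ A j := fun hyj => hj ((mem_partElem.mp hyχ j).2 hyj)
    simp only [mem_symmDiff, hyj, false_and, false_or] at hy
    exact ⟨hyχ, hy.1⟩
  rcases χ.eq_empty_or_nonempty with rfl | hχ
  · have hempty : partElem A ∅ ∩ partAvg S α A = ∅ := by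
      refine eq_empty_of_forall_notMem fun y ⟨hy, hyB⟩ => ?_
      obtain ⟨k, hk⟩ := mem_iUnion.mp (partAvg_subset_iUnion S hA hα hα1 hyB)
      simpa using (mem_partElem.mp hy k).2 hk
    simp [measure_mono_null hsub (hempty ▸ measure_empty)]
  calc volume (partElem A χ ∩ (A j ∆ partAvg S α A))
      ≤ volume (S.Ψ (partElem A χ) (∑ k ∈ χ, α k)) :=
        measure_mono (hsub.trans (partElem_inter_partAvg_subset S hA hα hα1))
    _ = _ := volume_Ψ_partElem S hA hα hα1 hχ

theorem measure_partElem_inter_symmDiff_partAvg_le (j : Fin (n+1)) (χ : Finset (Fin (n+1))) :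
    volume (partElem A χ ∩ (A j ∆ partAvg S α A)) ≤
      (∑ i ∈ univ.filter (fun i => i ∈ χ ↔ j ∉ χ), ENNReal.ofReal (α i)) *
        volume (partElem A χ) := by
  by_cases hj : j ∈ χ
  · rw [show univ.filter (fun i => i ∈ χ ↔ j ∉ χ) = χᶜ by ext; simp [hj]]
    exact measure_partElem_inter_symmDiff_partAvg_le_of_mem S hA hα hα1 hj
  · rw [show univ.filter (fun i => i ∈ χ ↔ j ∉ χ) = χ by ext; simp [hj]]
    exact measure_partElem_inter_symmDiff_partAvg_le_of_notMem S hA hα hα1 hj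

theorem measure_symmDiff_partAvg_le (j : Fin (n+1)) :
    volume (A j ∆ partAvg S α A) ≤ ∑ i, ENNReal.ofReal (α i) * volume (A i ∆ A j) := by
  calc volume (A j ∆ partAvg S α A)
      = volume (⋃ χ, partElem A χ ∩ (A j ∆ partAvg S α A)) := by
        rw [← iUnion_inter, iUnion_partElem, univ_inter]
    _ ≤ ∑ χ, volume (partElem A χ ∩ (A j ∆ partAvg S α A)) := measure_iUnion_fintype_le _ _
    _ ≤ ∑ χ, (∑ i ∈ univ.filter (fun i => i ∈ χ ↔ j ∉ χ), ENNReal.ofReal (α i)) *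
          volume (partElem A χ) :=
        sum_le_sum fun χ _ => measure_partElem_inter_symmDiff_partAvg_le S hA hα hα1 j χ
    _ = ∑ i, ENNReal.ofReal (α i) *
          ∑ χ ∈ univ.filter (fun χ => i ∈ χ ↔ j ∉ χ), volume (partElem A χ) := by
        simp only [sum_mul, mul_sum, sum_filter, ite_mul, mul_ite, zero_mul, mul_zero]
        exact sum_comm
    _ ≤ ∑ i, ENNReal.ofReal (α i) * volume (A i ∆ A j) := by
        gcongr with i
        exact sum_measure_partElem_le (fun k => (hA k).2)
          fun χ hχ => partElem_subset_symmDiff (mem_filter.mp hχ).2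

end PartAvg

section Dmu

variable {m : ℕ}

theorem dmu_eq_toReal_volume_symmDiff (A B : Set (Em m)) :
    dmu A B = (volume (A ∆ B)).toReal := rfl

theorem dmu_comm (A B : Set (Em m)) : dmu A B = dmu B A := by
  simp only [dmu_eq_toReal_volume_symmDiff, symmDiff_comm]

theorem volume_symmDiff_ne_top {A B : Set (Em m)} (hA : volume A ≠ ∞) (hB : volume B ≠ ∞) :
    volume (A ∆ B) ≠ ∞ :=
  ((measure_mono symmDiff_subset_union).trans_lt (measure_union_lt_top hA.lt_top hB.lt_top)).ne

theorem dmu_triangle {A B C : Set (Em m)} (hA : volume A ≠ ∞) (hB : volume B ≠ ∞)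
    (hC : volume C ≠ ∞) : dmu A C ≤ dmu A B + dmu B C :=
  ENNReal.toReal_le_add (measure_symmDiff_le A B C) (volume_symmDiff_ne_top hA hB)
    (volume_symmDiff_ne_top hB hC)

theorem dmu_partAvg_le (S : SubsetGen m) {n : ℕ} {α : Fin (n+1) → ℝ}
    {A : Fin (n+1) → Set (Em m)} (hA : ∀ i, JordanMeas (A i)) (hα : ∀ i, 0 ≤ α i)
    (hα1 : ∑ i, α i = 1) (j : Fin (n+1)) :
    dmu (A j) (partAvg S α A) ≤ ∑ i, α i * dmu (A j) (A i) := by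
  have hfin (i : Fin (n+1)) : ENNReal.ofReal (α i) * volume (A i ∆ A j) ≠ ∞ :=
    ENNReal.mul_ne_top ENNReal.ofReal_ne_top
      (volume_symmDiff_ne_top (hA i).1.measure_lt_top.ne (hA j).1.measure_lt_top.ne)
  calc dmu (A j) (partAvg S α A) = (volume (A j ∆ partAvg S α A)).toReal := rfl
    _ ≤ (∑ i, ENNReal.ofReal (α i) * volume (A i ∆ A j)).toReal :=
      ENNReal.toReal_mono (ENNReal.sum_ne_top.mpr fun i _ => hfin i)
        (measure_symmDiff_partAvg_le S hA hα hα1 j)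
    _ = ∑ i, α i * dmu (A j) (A i) := by
      rw [ENNReal.toReal_sum fun i _ => hfin i]
      refine Finset.sum_congr rfl fun i _ => ?_
      rw [ENNReal.toReal_mul, ENNReal.toReal_ofReal (hα i), dmu_comm]
      rfl

end Dmu

theorem bern_nonneg (n i : ℕ) {x : ℝ} (hx : x ∈ Icc (0 : ℝ) 1) : 0 ≤ bern n i x :=
  mul_nonneg (mul_nonneg (Nat.cast_nonneg _) (pow_nonneg hx.1 _))
    (pow_nonneg (sub_nonneg.mpr hx.2) _)

theorem sum_bern (n : ℕ) (x : ℝ) : ∑ i : Fin (n+1), bern n (i : ℕ) x = 1 := by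
  have hbinom := add_pow x (1 - x) n
  rw [add_sub_cancel, one_pow] at hbinom
  rw [Fin.sum_univ_eq_sum_range (fun i => bern n i x), hbinom]
  exact Finset.sum_congr rfl fun i _ => by rw [bern]; ring

theorem natCast_div_mem_Icc {n : ℕ} (i : Fin (n+1)) : ((i : ℕ) / n : ℝ) ∈ Icc (0 : ℝ) 1 :=
  ⟨by positivity, div_le_one_of_le₀ (by exact_mod_cast Fin.is_le i) n.cast_nonneg⟩

theorem stmt_13_general {m : ℕ} (S : SubsetGen m) (F : ℝ → Set (Em m))
    (hF : ∀ x ∈ Set.Icc (0:ℝ) 1, MemJ (F x))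
    (n : ℕ) (x : ℝ) (hx : x ∈ Set.Icc (0:ℝ) 1)
    (x' : ℝ) (hx'node : ∃ i : Fin (n+1), x' = (i : ℕ) / n) :
    dmu (F x) (setBern S F n x) ≤
      2 * dmu (F x') (F x) +
        ∑ i : Fin (n+1), bern n (i : ℕ) x * dmu (F x) (F ((i : ℕ) / n)) := by
  obtain ⟨i₀, rfl⟩ := hx'node
  set A : Fin (n+1) → Set (Em m) := fun i => F ((i : ℕ) / n)
  have hA (i : Fin (n+1)) : MemJ (A i) := hF _ (natCast_div_mem_Icc i)
  have hfin (i : Fin (n+1)) : volume (A i) ≠ ∞ := (hA i).2.1.measure_lt_top.ne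
  have hFx : volume (F x) ≠ ∞ := (hF x hx).2.1.measure_lt_top.ne
  have hAJ (i : Fin (n+1)) : JordanMeas (A i) := (hA i).2
  have hB : volume (setBern S F n x) ≠ ∞ :=
    (isBounded_partAvg S hAJ (fun i => bern_nonneg n i hx) (sum_bern n x)).measure_lt_top.ne
  calc dmu (F x) (setBern S F n x) ≤ dmu (F x) (A i₀) + dmu (A i₀) (setBern S F n x) :=
        dmu_triangle hFx (hfin i₀) hB
    _ ≤ dmu (F x) (A i₀) + ∑ i : Fin (n+1), bern n i x * dmu (A i₀) (A i) := by
        gcongr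
        exact dmu_partAvg_le S hAJ (fun i => bern_nonneg n i hx) (sum_bern n x) i₀
    _ ≤ dmu (F x) (A i₀) +
          ∑ i : Fin (n+1), bern n i x * (dmu (A i₀) (F x) + dmu (F x) (A i)) := by
        gcongr with i
        · exact bern_nonneg n i hx
        · exact dmu_triangle (hfin i₀) hFx (hfin i)
    _ = 2 * dmu (A i₀) (F x) + ∑ i : Fin (n+1), bern n i x * dmu (F x) (A i) := by
        rw [dmu_comm (F x)]
        simp only [mul_add, Finset.sum_add_distrib, ← Finset.sum_mul, sum_bern]
        ring

/-- if x′ is a closest node to x among i/n, i = 0,…,n, then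
d_μ(F(x), B_n(F,x)) ≤ 2 d_μ(F(x′), F(x)) + ∑_{i=0}^n b(n,x;i) d_μ(F(x), F(i/n)). -/
theorem stmt_13 {m : ℕ} (S : SubsetGen m) (F : ℝ → Set (Em m))
    (hF : ∀ x ∈ Set.Icc (0:ℝ) 1, MemJ (F x))
    (n : ℕ) (hn : 1 ≤ n) (x : ℝ) (hx : x ∈ Set.Icc (0:ℝ) 1)
    (x' : ℝ) (hx'node : ∃ i : Fin (n+1), x' = (i : ℕ) / n)
    (hx'closest : ∀ i : Fin (n+1), |x - x'| ≤ |x - (i : ℕ) / n|) :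
    dmu (F x) (setBern S F n x) ≤
      2 * dmu (F x') (F x) +
        ∑ i : Fin (n+1), bern n (i : ℕ) x * dmu (F x) (F ((i : ℕ) / n)) :=
  stmt_13_general S F hF n x hx x' hx'node
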